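/- arXiv:0708.1343 — 3 statements merged into one kernel-verified Lean document; each statement's English description precedes it below -/
import Mathlib

section
/- Every matrix M ∈ 𝓜 can be brought into semi-reduced form via left multiplication by finitely many elementary units of 𝓜; that is, for every M ∈ 𝓜 there exists a finite product U of elementary units of 𝓜 such that U·M is semi-reduced. -/
open Polynomial Matrix

/-- Membership in the subring `𝓜` of `F[t]^{n×n}`: every entry strictly below the
diagonal vanishes at `t = 0` (i.e. is a multiple of `t`). -/
def InM {F : Type*} [Field F] {n : ℕ} (M : Matrix (Fin n) (Fin n) (Polynomial F)) : Prop :=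
  ∀ a b : Fin n, b < a → (M a b).eval 0 = 0

/-- The degree matrix `𝒟(M)`: `𝒟(M)_{ab} = n·deg(m_{ab}) − a + b`, with the zero
polynomial having degree `−∞` (here `⊥` in `WithBot ℤ`). -/
noncomputable def degMat {F : Type*} [Field F] {n : ℕ}
    (M : Matrix (Fin n) (Fin n) (Polynomial F)) : Matrix (Fin n) (Fin n) (WithBot ℤ) :=
  Matrix.of fun a b =>
    WithBot.map (fun d : ℕ => (n : ℤ) * (d : ℤ) - ((a : ℕ) : ℤ) + ((b : ℕ) : ℤ))
      ((M a b).degree)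

/-- `M` is semi-reduced if the maxima of the non-trivial rows of `𝒟(M)` occur in
pairwise different columns. -/
def SemiReduced {F : Type*} [Field F] {n : ℕ}
    (M : Matrix (Fin n) (Fin n) (Polynomial F)) : Prop :=
  ∀ a a' b : Fin n, a ≠ a' → M a ≠ 0 → M a' ≠ 0 →
    degMat M a b = Finset.univ.sup (fun c => degMat M a c) →
    degMat M a' b = Finset.univ.sup (fun c => degMat M a' c) → False

/-- Elementary units of `𝓜`: (i) `I + (α−1)E_{aa}` with `α ≠ 0`;
(ii) `I + t^N α E_{ab}` with `N ≥ 0`, `a < b`; (iii) `I + t^N α E_{ab}` with `N > 0`,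
`b < a`. -/
def IsElemUnit {F : Type*} [Field F] {n : ℕ}
    (E : Matrix (Fin n) (Fin n) (Polynomial F)) : Prop :=
  (∃ (a : Fin n) (α : F), α ≠ 0 ∧
      E = 1 + Matrix.single a a (Polynomial.C α - 1)) ∨
  (∃ (a b : Fin n) (N : ℕ) (α : F), a < b ∧
      E = 1 + Matrix.single a b (Polynomial.X ^ N * Polynomial.C α)) ∨
  (∃ (a b : Fin n) (N : ℕ) (α : F), b < a ∧ 0 < N ∧
      E = 1 + Matrix.single a b (Polynomial.X ^ N * Polynomial.C α))

/-!
The entry `n·deg m_{ab} − a + b` of `𝒟(M)` is congruent to `b − a` modulo `n`, so the nonzero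
entries of `𝒟(M)` in one row, or in one column, are pairwise distinct. Hence every nonzero row
has a unique pivot (the column of its maximum), and two rows `a ≠ a'` with the same pivot
column `b` have distinct pivot values, say the one of row `a` is larger. Adding
`−(lc m_{ab} / lc m_{a'b}) t^N` times row `a'` to row `a`, with `N = deg m_{ab} − deg m_{a'b}`,
cancels the leading term at `(a, b)` and keeps every other entry of row `a` below the old
maximum, so the maximum of row `a` drops. The same comparison of weights forces `N > 0` when
`a' < a`, so this row operation is an elementary unit. The row maxima of nonzero rows exceed
`−n`, so their sum, shifted into `ℕ`, strictly decreases and the process terminates.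
-/

open Polynomial Matrix Finset

theorem Fin.eq_of_natCast_dvd_sub {n : ℕ} {i j : Fin n} (h : (n : ℤ) ∣ (j : ℤ) - i) : i = j :=
  Fin.ext <| (Nat.modEq_iff_dvd.2 h).eq_of_lt_of_lt i.isLt j.isLt

section DegreeMatrix

variable {F : Type*} [Field F] {n : ℕ}

def degWeight (n : ℕ) (a b : Fin n) (d : ℕ) : ℤ := n * d - a + b

theorem degWeight_strictMono (a b : Fin n) : StrictMono (degWeight n a b) := by
  intro d e hde
  have : (n : ℤ) * d < n * e :=
    mul_lt_mul_of_pos_left (by exact_mod_cast hde) (by exact_mod_cast a.pos)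
  unfold degWeight
  linarith

theorem neg_lt_degWeight (a b : Fin n) (d : ℕ) : -(n : ℤ) < degWeight n a b d := by
  have : (0 : ℤ) ≤ n * d := by positivity
  have := a.isLt
  unfold degWeight
  omega

theorem eq_iff_eq_of_degWeight_eq {a a' b b' : Fin n} {d e : ℕ}
    (h : degWeight n a b d = degWeight n a' b' e) : a = a' ↔ b = b' := by
  unfold degWeight at h
  constructor
  · rintro rfl
    exact Fin.eq_of_natCast_dvd_sub ⟨d - e, by linarith⟩
  · rintro rfl
    exact Fin.eq_of_natCast_dvd_sub ⟨e - d, by linarith⟩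

theorem degMat_apply (M : Matrix (Fin n) (Fin n) F[X]) (a b : Fin n) :
    degMat M a b = (M a b).degree.map (degWeight n a b) := rfl

theorem degMat_of_ne_zero {M : Matrix (Fin n) (Fin n) F[X]} {a b : Fin n} (h : M a b ≠ 0) :
    degMat M a b = degWeight n a b (M a b).natDegree := by
  rw [degMat_apply, degree_eq_natDegree h]
  rfl

theorem degMat_eq_bot_iff {M : Matrix (Fin n) (Fin n) F[X]} {a b : Fin n} :
    degMat M a b = ⊥ ↔ M a b = 0 := by
  simp [degMat_apply]

theorem le_of_degWeight_lt {a a' b : Fin n} {d d' : ℕ}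
    (h : degWeight n a' b d' < degWeight n a b d) : d' ≤ d ∧ (a' < a → d' < d) := by
  unfold degWeight at h
  have ha' : (a' : ℤ) < n := by exact_mod_cast a'.isLt
  constructor
  · by_contra! hd
    have : (n : ℤ) * (d + 1) ≤ n * d' :=
      mul_le_mul_of_nonneg_left (by exact_mod_cast hd) (by positivity)
    linarith
  · intro haa
    by_contra! hd
    have : (n : ℤ) * d ≤ n * d' :=
      mul_le_mul_of_nonneg_left (by exact_mod_cast hd) (by positivity)
    have : (a' : ℤ) < a := by exact_mod_cast haa
    linarith

theorem eq_iff_eq_of_degMat_eq {M : Matrix (Fin n) (Fin n) F[X]} {a a' b b' : Fin n}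
    (hb : M a b ≠ 0) (h : degMat M a b = degMat M a' b') : a = a' ↔ b = b' := by
  have hb' : M a' b' ≠ 0 := fun h0 => hb (degMat_eq_bot_iff.1 (h.trans (degMat_eq_bot_iff.2 h0)))
  rw [degMat_of_ne_zero hb, degMat_of_ne_zero hb', WithBot.coe_inj] at h
  exact eq_iff_eq_of_degWeight_eq h

noncomputable def rowMax (M : Matrix (Fin n) (Fin n) F[X]) (a : Fin n) : WithBot ℤ :=
  univ.sup (degMat M a)

theorem degMat_le_rowMax (M : Matrix (Fin n) (Fin n) F[X]) (a c : Fin n) :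
    degMat M a c ≤ rowMax M a :=
  le_sup (mem_univ c)

theorem ne_zero_of_degMat_eq_rowMax {M : Matrix (Fin n) (Fin n) F[X]} {a b : Fin n}
    (h : M a ≠ 0) (hmax : degMat M a b = rowMax M a) : M a b ≠ 0 := by
  obtain ⟨c, hc⟩ := Function.ne_iff.1 h
  intro h0
  refine hc (degMat_eq_bot_iff.1 (le_bot_iff.1 ?_))
  rw [← degMat_eq_bot_iff.2 h0, hmax]
  exact degMat_le_rowMax M a c

theorem degMat_lt_rowMax {M : Matrix (Fin n) (Fin n) F[X]} {a b c : Fin n}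
    (hb : M a b ≠ 0) (hmax : degMat M a b = rowMax M a) (hc : c ≠ b) :
    degMat M a c < rowMax M a := by
  refine (degMat_le_rowMax M a c).lt_of_ne fun h => hc ?_
  rw [← hmax] at h
  exact ((eq_iff_eq_of_degMat_eq hb h.symm).1 rfl).symm

theorem rowMax_congr {M M' : Matrix (Fin n) (Fin n) F[X]} {a : Fin n} (h : M' a = M a) :
    rowMax M' a = rowMax M a :=
  sup_congr rfl fun c _ => by rw [degMat_apply, degMat_apply, h]

theorem degree_add_X_pow_mul_C_mul_lt {p q : F[X]} (hp : p ≠ 0) (hq : q ≠ 0)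
    (h : q.natDegree ≤ p.natDegree) :
    (p + X ^ (p.natDegree - q.natDegree) * C (-(p.leadingCoeff / q.leadingCoeff)) * q).degree
      < p.degree := by
  have hc : p.leadingCoeff / q.leadingCoeff ≠ 0 :=
    div_ne_zero (leadingCoeff_ne_zero.2 hp) (leadingCoeff_ne_zero.2 hq)
  rw [map_neg, mul_neg, neg_mul, ← sub_eq_add_neg]
  refine degree_sub_lt_left ?_ hp ?_
  · rw [degree_mul, degree_mul, degree_X_pow, degree_C hc, add_zero, degree_eq_natDegree hp,
      degree_eq_natDegree hq, ← Nat.cast_add, Nat.sub_add_cancel h]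
  · rw [leadingCoeff_mul, leadingCoeff_mul, leadingCoeff_X_pow, leadingCoeff_C, one_mul,
      div_mul_cancel₀ _ (leadingCoeff_ne_zero.2 hq)]

theorem map_degWeight_degree_X_pow_mul (a a' c : Fin n) (N : ℕ) (q : F[X]) :
    (X ^ N * q).degree.map (degWeight n a c)
      = q.degree.map (degWeight n a' c) + ((n * N - a + a' : ℤ) : WithBot ℤ) := by
  rw [degree_mul, degree_X_pow]
  induction q.degree using WithBot.recBotCoe with
  | bot => simp
  | coe d =>
    rw [← WithBot.coe_natCast, ← WithBot.coe_add, WithBot.map_coe, WithBot.map_coe,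
      ← WithBot.coe_add, WithBot.coe_inj]
    unfold degWeight
    push_cast
    ring

theorem exists_rowMax_transvection_mul_lt {M : Matrix (Fin n) (Fin n) F[X]} {a a' b : Fin n}
    (hb : M a b ≠ 0) (hb' : M a' b ≠ 0)
    (hmax : degMat M a b = rowMax M a) (hmax' : degMat M a' b = rowMax M a')
    (hlt : degMat M a' b < degMat M a b) :
    ∃ (N : ℕ) (α : F), (a' < a → 0 < N) ∧
      rowMax (transvection a a' (X ^ N * C α) * M) a < rowMax M a := by
  have hα : -((M a b).leadingCoeff / (M a' b).leadingCoeff) ≠ 0 :=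
    neg_ne_zero.2 (div_ne_zero (leadingCoeff_ne_zero.2 hb) (leadingCoeff_ne_zero.2 hb'))
  rw [degMat_of_ne_zero hb, degMat_of_ne_zero hb', WithBot.coe_lt_coe] at hlt
  set d := (M a b).natDegree
  set d' := (M a' b).natDegree
  obtain ⟨hd, hdlt⟩ := le_of_degWeight_lt hlt
  refine ⟨d - d', -((M a b).leadingCoeff / (M a' b).leadingCoeff),
    fun h => Nat.sub_pos_of_lt (hdlt h), ?_⟩
  rw [← hmax, degMat_of_ne_zero hb]
  refine (Finset.sup_lt_iff (WithBot.bot_lt_coe _)).2 fun c _ => ?_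
  rw [degMat_apply, transvection_mul_apply_same]
  rcases eq_or_ne c b with rfl | hc
  · rw [← degMat_of_ne_zero hb, degMat_apply]
    exact (degWeight_strictMono a c).withBot_map (degree_add_X_pow_mul_C_mul_lt hb hb' hd)
  have hmono := (degWeight_strictMono a c).monotone.withBot_map
  refine (hmono (degree_add_le _ _)).trans_lt ?_
  rw [hmono.map_max]
  refine max_lt ?_ ?_
  · rw [← degMat_apply, ← degMat_of_ne_zero hb, hmax]
    exact degMat_lt_rowMax hb hmax hc
  · rw [mul_assoc, map_degWeight_degree_X_pow_mul a a' c, degree_C_mul hα, ← degMat_apply]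
    calc _ < (degWeight n a' b d' : WithBot ℤ) + ((n * (d - d' : ℕ) - a + a' : ℤ) : WithBot ℤ) :=
          WithBot.add_lt_add_right WithBot.coe_ne_bot <|
            (degMat_lt_rowMax hb' hmax' hc).trans_eq (hmax'.symm.trans (degMat_of_ne_zero hb'))
      _ = degWeight n a b d := by
          rw [← WithBot.coe_add, WithBot.coe_inj]
          unfold degWeight
          push_cast [Nat.cast_sub hd]
          ring

def rowSize (n : ℕ) (s : WithBot ℤ) : ℕ := (s.unbotD (-n : ℤ) + n).toNat

theorem rowSize_lt_rowSize {s t : WithBot ℤ} (h : s < t) (ht : ((-n : ℤ) : WithBot ℤ) < t) :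
    rowSize n s < rowSize n t := by
  induction t using WithBot.recBotCoe with
  | bot => exact absurd ht not_lt_bot
  | coe v =>
    rw [WithBot.coe_lt_coe] at ht
    induction s using WithBot.recBotCoe with
    | bot => simp only [rowSize, WithBot.unbotD_bot, WithBot.unbotD_coe]; omega
    | coe u =>
      rw [WithBot.coe_lt_coe] at h
      simp only [rowSize, WithBot.unbotD_coe]
      omega

noncomputable def reductionMeasure (M : Matrix (Fin n) (Fin n) F[X]) : ℕ :=
  ∑ a, rowSize n (rowMax M a)

theorem reductionMeasure_lt {M M' : Matrix (Fin n) (Fin n) F[X]} {a b : Fin n}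
    (hrows : ∀ i ≠ a, M' i = M i) (hb : M a b ≠ 0) (hmax : degMat M a b = rowMax M a)
    (hlt : rowMax M' a < rowMax M a) :
    reductionMeasure M' < reductionMeasure M := by
  have hpos : ((-n : ℤ) : WithBot ℤ) < rowMax M a := by
    rw [← hmax, degMat_of_ne_zero hb, WithBot.coe_lt_coe]
    exact neg_lt_degWeight a b _
  refine sum_lt_sum (fun i _ => ?_) ⟨a, mem_univ a, rowSize_lt_rowSize hlt hpos⟩
  rcases eq_or_ne i a with rfl | hi
  · exact (rowSize_lt_rowSize hlt hpos).le
  · rw [rowMax_congr (hrows i hi)]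

theorem isElemUnit_transvection {a a' : Fin n} {N : ℕ} (α : F) (ha : a ≠ a')
    (hN : a' < a → 0 < N) : IsElemUnit (transvection a a' (X ^ N * C α)) := by
  rcases ha.lt_or_gt with h | h
  · exact .inr (.inl ⟨a, a', N, α, h, rfl⟩)
  · exact .inr (.inr ⟨a, a', N, α, h, hN h, rfl⟩)

theorem exists_isElemUnit_reductionMeasure_lt {M : Matrix (Fin n) (Fin n) F[X]}
    (h : ¬ SemiReduced M) : ∃ E, IsElemUnit E ∧ reductionMeasure (E * M) < reductionMeasure M := by
  simp only [SemiReduced, not_forall, imp_false, not_not] at h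
  obtain ⟨a, a', b, ha, hra, hra', hmax, hmax'⟩ := h
  have hb := ne_zero_of_degMat_eq_rowMax hra hmax
  have hb' := ne_zero_of_degMat_eq_rowMax hra' hmax'
  wlog hlt : degMat M a' b < degMat M a b generalizing a a'
  · refine this a' a ha.symm hra' hra hmax' hmax hb' hb (lt_of_le_of_ne (not_lt.1 hlt) ?_)
    exact fun h => ha ((eq_iff_eq_of_degMat_eq hb h).2 rfl)
  obtain ⟨N, α, hN, hrow⟩ := exists_rowMax_transvection_mul_lt hb hb' hmax hmax' hlt
  exact ⟨_, isElemUnit_transvection α ha hN, reductionMeasure_lt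
    (fun i hi => funext fun c => transvection_mul_apply_of_ne _ _ _ _ hi _ _) hb hmax hrow⟩

end DegreeMatrix

theorem semiReduce_by_elemUnits_general {F : Type*} [Field F] {n : ℕ}
    (M : Matrix (Fin n) (Fin n) (Polynomial F)) :
    ∃ L : List (Matrix (Fin n) (Fin n) (Polynomial F)),
      (∀ E ∈ L, IsElemUnit E) ∧ SemiReduced (L.prod * M) := by
  induction hm : reductionMeasure M using Nat.strong_induction_on generalizing M with
  | _ m ih =>
  by_cases hM : SemiReduced M
  · exact ⟨[], by simp, by simpa using hM⟩
  obtain ⟨E, hE, hlt⟩ := exists_isElemUnit_reductionMeasure_lt hM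
  obtain ⟨L, hL, hLM⟩ := ih _ (hm ▸ hlt) (E * M) rfl
  refine ⟨L ++ [E], ?_, ?_⟩
  · simpa [or_imp, forall_and] using ⟨hL, hE⟩
  · rwa [List.prod_append, List.prod_singleton, mul_assoc]

/-- Every matrix `M ∈ 𝓜` can be brought into semi-reduced form via left
multiplication by finitely many elementary units of `𝓜`. -/
theorem semiReduce_by_elemUnits {F : Type*} [Field F] [Fintype F] {n : ℕ} (hn : 2 ≤ n)
    (M : Matrix (Fin n) (Fin n) (Polynomial F)) (hM : InM M) :
    ∃ L : List (Matrix (Fin n) (Fin n) (Polynomial F)),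
      (∀ E ∈ L, IsElemUnit E) ∧ SemiReduced (L.prod * M) :=
  semiReduce_by_elemUnits_general M
end

section
/- Let M ∈ 𝓜 be delay-free with Supp(M) = {i_1,…,i_k}, where i_1 < … < i_k, and let M̃ ∈ F[t]^{k×n} be the matrix whose rows are the rows M_{i_1},…,M_{i_k} of M. Then the following are equivalent: (a) M̃ is basic; (b) there exist row vectors M̂_i ∈ F[t]^{1×n} for i ∈ {1,…,n}\{i_1,…,i_k} such that the matrix N ∈ F[t]^{n×n}, whose i-th row is the i-th row of M for i ∈ {i_1,…,i_k} and is M̂_i otherwise, is a unit of the ring 𝓜. -/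
open Polynomial Matrix

/-- `M ∈ 𝓜` is delay-free if `m_{aa}(0) ≠ 0` for every index `a` of a nonzero row. -/
def DelayFree {F : Type*} [Field F] {n : ℕ}
    (M : Matrix (Fin n) (Fin n) (Polynomial F)) : Prop :=
  ∀ a : Fin n, M a ≠ 0 → (M a a).eval 0 ≠ 0

/-- A `k × n` matrix over `F[t]` is basic if it has a right inverse over `F[t]`
(equivalently, its `k × k` minors are coprime). -/
def IsBasic {F : Type*} [Field F] {k n : ℕ}
    (G : Matrix (Fin k) (Fin n) (Polynomial F)) : Prop :=
  ∃ H : Matrix (Fin n) (Fin k) (Polynomial F), G * H = 1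

/-!
Over the principal ideal domain `F[t]`, a `k × n` matrix with a right inverse `H` splits `F[t]^n`
as its row space plus the free module `ker (· H)`, so its rows extend to a basis, i.e. to a
unimodular matrix `N₁`. At `t = 0`, the rows of `M(0)` on the support together with unit vectors
elsewhere form an upper triangular `U` with nonzero diagonal (delay-freeness), and the constant
change of rows `U N₁(0)⁻¹` fixes the support rows and turns `N₁` into a unimodular `N` with
`N(0) = U`. Membership in `𝓜` only depends on the value at `0` being upper triangular, a property
inherited by inverses, so `N` is a unit of `𝓜`.
-/

theorem Function.Injective.exists_sumEquiv_inl_eq {κ ι β : Type*} [Fintype κ] [Fintype ι]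
    [Fintype β] {i : κ → ι} (hi : Function.Injective i)
    (hcard : Fintype.card κ + Fintype.card β = Fintype.card ι) :
    ∃ σ : κ ⊕ β ≃ ι, ∀ l, σ (.inl l) = i l := by
  classical
  have hβ : Fintype.card β = Fintype.card ((Set.range i)ᶜ : Set ι) := by
    rw [Fintype.card_compl_set, Set.card_range_of_injective hi]
    omega
  exact ⟨((Equiv.ofInjective i hi).sumCongr (Fintype.equivOfCardEq hβ)).trans
    (Equiv.Set.sumCompl (Set.range i)), fun l => by simp⟩

section PID

variable {R ι κ : Type*} [CommRing R] [IsDomain R] [IsPrincipalIdealRing R]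
  [Fintype ι] [Fintype κ] [DecidableEq κ]

theorem Matrix.exists_basis_sumInl_eq_of_mul_eq_one {G : Matrix κ ι R} {H : Matrix ι κ R}
    (hGH : G * H = 1) :
    ∃ (m : ℕ) (b : Module.Basis (κ ⊕ Fin m) R (ι → R)), ∀ l, b (.inl l) = G l := by
  let K := LinearMap.ker H.vecMulLinear
  -- `v ↦ v - (v H) G` projects onto `K` along the row space of `G`
  have hsplit : Function.Bijective fun p : (κ → R) × K => p.1 ᵥ* G + p.2 := by
    constructor
    · rintro ⟨c, w⟩ ⟨c', w'⟩ h
      have hw : ∀ x : K, (x : ι → R) ᵥ* H = 0 := fun x => x.2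
      have hc : c = c' := by
        simpa [add_vecMul, vecMul_vecMul, hGH, hw] using congrArg (· ᵥ* H) h
      subst hc
      exact Prod.ext rfl (Subtype.ext (by simpa using h))
    · intro v
      refine ⟨(v ᵥ* H, ⟨v - v ᵥ* H ᵥ* G, ?_⟩), by simp⟩
      simp [K, vecMul_vecMul, Matrix.mul_assoc, hGH]
  let e : ((κ → R) × K) ≃ₗ[R] (ι → R) := LinearEquiv.ofBijective
    (G.vecMulLinear.comp (LinearMap.fst R _ _) + K.subtype.comp (LinearMap.snd R _ _)) hsplit
  obtain ⟨m, bK⟩ := Submodule.basisOfPid (Pi.basisFun R ι) K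
  refine ⟨m, ((Pi.basisFun R κ).prod bK).map e, fun l => ?_⟩
  simp only [Module.Basis.map_apply, Module.Basis.prod_apply, Sum.elim_inl, Function.comp_apply,
    Pi.basisFun_apply, LinearMap.inl_apply]
  change Pi.single l 1 ᵥ* G + ((0 : K) : ι → R) = G l
  rw [Submodule.coe_zero, add_zero, single_one_vecMul, row]

theorem Matrix.exists_isUnit_det_row_eq_of_mul_eq_one [DecidableEq ι] {G : Matrix κ ι R}
    {H : Matrix ι κ R} (hGH : G * H = 1) {i : κ → ι} (hi : Function.Injective i) :
    ∃ N : Matrix ι ι R, IsUnit N.det ∧ ∀ l, N (i l) = G l := by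
  obtain ⟨m, b, hb⟩ := exists_basis_sumInl_eq_of_mul_eq_one hGH
  have hcard : Fintype.card κ + Fintype.card (Fin m) = Fintype.card ι := by
    simpa using (Module.finrank_eq_card_basis b).symm
  obtain ⟨σ, hσ⟩ := hi.exists_sumEquiv_inl_eq hcard
  refine ⟨Matrix.of (b.reindex σ), ?_, fun l => ?_⟩
  · rw [← Pi.basisFun_det_apply]
    exact (Pi.basisFun R ι).isUnit_det _
  · rw [← hσ, ← hb]
    exact (b.reindex_apply σ _).trans (congrArg b (σ.symm_apply_apply _))

end PID

theorem Matrix.exists_isUnit_det_map_eval_zero_eq {R ι κ : Type*} [CommRing R] [Fintype ι]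
    [DecidableEq ι] {N₁ : Matrix ι ι R[X]} (hN₁ : IsUnit N₁.det) {U : Matrix ι ι R}
    (hU : IsUnit U.det) {i : κ → ι} (hrow : ∀ l, U (i l) = N₁.map (eval 0) (i l)) :
    ∃ N : Matrix ι ι R[X],
      IsUnit N.det ∧ N.map (eval 0) = U ∧ ∀ l, N (i l) = N₁ (i l) := by
  set N₀ := N₁.map (eval 0) with hN₀_def
  have hN₀ : IsUnit N₀.det := by
    simpa [N₀, RingHom.map_det] using hN₁.map (evalRingHom (0 : R))
  have hB : ∀ l, (U * N₀⁻¹) (i l) = (1 : Matrix ι ι R) (i l) := fun l => by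
    rw [mul_apply_eq_vecMul, hrow, ← mul_apply_eq_vecMul, mul_nonsing_inv _ hN₀]
  refine ⟨(U * N₀⁻¹).map C * N₁, ?_, ?_, fun l => ?_⟩
  · rw [det_mul, ← RingHom.mapMatrix_apply, ← RingHom.map_det, det_mul]
    exact (isUnit_C.mpr (hU.mul (isUnit_nonsing_inv_det _ hN₀))).mul hN₁
  · rw [← coe_evalRingHom, Matrix.map_mul, Matrix.map_map, coe_evalRingHom, ← hN₀_def]
    rw [show (eval 0 ∘ C : R → R) = id from funext fun _ => eval_C, Matrix.map_id,
      Matrix.mul_assoc, nonsing_inv_mul _ hN₀, Matrix.mul_one]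
  · calc ((U * N₀⁻¹).map C * N₁) (i l) = ((1 : Matrix ι ι R).map C * N₁) (i l) :=
          congrArg (· ᵥ* N₁) (funext fun b => congrArg C (congrFun (hB l) b))
      _ = N₁ (i l) := by rw [Matrix.map_one _ C.map_zero C.map_one, one_mul]

theorem inM_iff_blockTriangular_map_eval_zero {F : Type*} [Field F] {n : ℕ}
    {N : Matrix (Fin n) (Fin n) F[X]} : InM N ↔ (N.map (eval 0)).BlockTriangular id :=
  ⟨fun h _ _ hba => h _ _ hba, fun h _ _ hba => h hba⟩

theorem InM.inv {F : Type*} [Field F] {n : ℕ} {N : Matrix (Fin n) (Fin n) F[X]} (hN : InM N) :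
    InM N⁻¹ := by
  rw [inM_iff_blockTriangular_map_eval_zero] at hN ⊢
  by_cases h : IsUnit N.det
  · have hmul : N.map (eval 0) * N⁻¹.map (eval 0) = 1 := by
      rw [← coe_evalRingHom, ← Matrix.map_mul, mul_nonsing_inv _ h,
        Matrix.map_one _ (map_zero _) (map_one _)]
    have : Invertible (N.map (eval 0)) := invertibleOfRightInverse _ _ hmul
    rw [← inv_eq_right_inv hmul]
    exact blockTriangular_inv_of_blockTriangular hN
  · rw [nonsing_inv_apply_not_isUnit _ h]
    intro a b _
    simp

theorem exists_blockTriangular_isUnit_det_row_eq {F κ : Type*} [Field F] {n : ℕ}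
    {M : Matrix (Fin n) (Fin n) F[X]} (hM : InM M) {i : κ → Fin n}
    (hdiag : ∀ l, (M (i l) (i l)).eval 0 ≠ 0) :
    ∃ U : Matrix (Fin n) (Fin n) F,
      U.BlockTriangular id ∧ IsUnit U.det ∧ ∀ l, U (i l) = M.map (eval 0) (i l) := by
  classical
  let U : Matrix (Fin n) (Fin n) F :=
    of fun a b => if a ∈ Set.range i then (M a b).eval 0 else (1 : Matrix (Fin n) (Fin n) F) a b
  have hU : U.BlockTriangular id := by
    intro a b hba
    by_cases ha : a ∈ Set.range i
    · simpa only [U, of_apply, if_pos ha] using hM a b hba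
    · simp only [U, of_apply, if_neg ha]
      exact one_apply_ne hba.ne'
  refine ⟨U, hU, ?_, fun l => by ext b; simp [U]⟩
  rw [det_of_isUpperTriangular hU, isUnit_iff_ne_zero, Finset.prod_ne_zero_iff]
  intro a _
  by_cases ha : a ∈ Set.range i
  · obtain ⟨l, rfl⟩ := ha
    simpa [U] using hdiag l
  · simp only [U, of_apply, if_neg ha, one_apply_eq]
    exact one_ne_zero

theorem isBasic_submatrix_of_mul_eq_one {F : Type*} [Field F] {n k : ℕ}
    {N N' : Matrix (Fin n) (Fin n) F[X]} (h : N * N' = 1) {i : Fin k → Fin n}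
    (hi : Function.Injective i) : IsBasic (N.submatrix i id) :=
  ⟨N'.submatrix id i, by
    rw [← submatrix_mul _ _ _ _ _ Function.bijective_id, h, submatrix_one _ hi]⟩

theorem basic_iff_completable_to_unit_general {F : Type*} [Field F] {n k : ℕ}
    (M : Matrix (Fin n) (Fin n) (Polynomial F))
    (hM : InM M) (hdf : DelayFree M)
    (i : Fin k → Fin n) (hmono : StrictMono i)
    (hsupp : ∀ a : Fin n, M a ≠ 0 ↔ ∃ l : Fin k, a = i l) :
    IsBasic (Matrix.of fun (l : Fin k) (b : Fin n) => M (i l) b) ↔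
      ∃ N : Matrix (Fin n) (Fin n) (Polynomial F),
        (∀ l : Fin k, N (i l) = M (i l)) ∧ InM N ∧
        ∃ N' : Matrix (Fin n) (Fin n) (Polynomial F), InM N' ∧ N * N' = 1 ∧ N' * N = 1 := by
  constructor
  · rintro ⟨H, hGH⟩
    obtain ⟨N₁, hN₁, hN₁row⟩ := exists_isUnit_det_row_eq_of_mul_eq_one hGH hmono.injective
    obtain ⟨U, hUtri, hU, hUrow⟩ :=
      exists_blockTriangular_isUnit_det_row_eq hM fun l => hdf _ ((hsupp _).2 ⟨l, rfl⟩)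
    obtain ⟨N, hN, hNU, hNrow⟩ :=
      exists_isUnit_det_map_eval_zero_eq hN₁ hU (i := i) fun l => by ext b; simp [hUrow, hN₁row]
    have hNM : InM N := inM_iff_blockTriangular_map_eval_zero.2 (hNU ▸ hUtri)
    exact ⟨N, fun l => (hNrow l).trans (hN₁row l), hNM,
      N⁻¹, hNM.inv, mul_nonsing_inv _ hN, nonsing_inv_mul _ hN⟩
  · rintro ⟨N, hrow, -, N', -, hNN', -⟩
    have hG : (Matrix.of fun l b => M (i l) b) = N.submatrix i id := by
      ext l b
      simp [hrow]
    exact hG ▸ isBasic_submatrix_of_mul_eq_one hNN' hmono.injective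

/-- Let `M ∈ 𝓜` be delay-free with support `{i_1 < … < i_k}`
(enumerated by the strictly monotone map `i`), and let `M̃` be the `k × n` matrix whose
rows are the nonzero rows of `M`.  Then `M̃` is basic if and only if the zero rows of `M`
can be replaced by suitable rows so that the resulting matrix is a unit of the ring `𝓜`. -/
theorem basic_iff_completable_to_unit {F : Type*} [Field F] [Fintype F] {n k : ℕ}
    (hn : 2 ≤ n) (M : Matrix (Fin n) (Fin n) (Polynomial F))
    (hM : InM M) (hdf : DelayFree M)
    (i : Fin k → Fin n) (hmono : StrictMono i)
    (hsupp : ∀ a : Fin n, M a ≠ 0 ↔ ∃ l : Fin k, a = i l) :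
    IsBasic (Matrix.of fun (l : Fin k) (b : Fin n) => M (i l) b) ↔
      ∃ N : Matrix (Fin n) (Fin n) (Polynomial F),
        (∀ l : Fin k, N (i l) = M (i l)) ∧ InM N ∧
        ∃ N' : Matrix (Fin n) (Fin n) (Polynomial F), InM N' ∧ N * N' = 1 ∧ N' * N = 1 :=
  basic_iff_completable_to_unit_general M hM hdf i hmono hsupp
end

section
/- Let j_1,…,j_{n−1} ∈ {1,…,n} be pairwise different and let d_1,…,d_{n−1} ∈ ℕ be such that j_i < i implies d_i > 0. Then there exists a basic matrix M = (m_{ij}) ∈ F[t]^{(n−1)×n} satisfying: (i) deg(m_{ij}) ≤ d_i for j < j_i; (ii) deg(m_{ij}) = d_i for j = j_i; (iii) deg(m_{ij}) < d_i for j > j_i; (iv) m_{ii}(0) = 1 for all i; and the following strengthened properties: (vi) the only nonzero entries of M strictly below the diagonal are at the positions (i, j_i) with j_i < i, and those entries equal t^{d_i}; (vii) if j_i < i, then the only nonconstant entry in the i-th row of M is at position (i, j_i). -/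
/-!
Extend `j` to a permutation `σ` of the columns by sending the last column to the column that `j`
misses. Row `i` carries `X ^ d i` in column `σ i` and `1` on the diagonal; if moreover `i` is the
largest element of its `σ`-cycle and `d i > 0` (a cycle head), it also carries a `1` in the next
column that is a cycle head or the last one. Choosing in each row the column of that extra `1`,
or the diagonal if there is none, gives a square submatrix with ones on the diagonal in which
every other nonzero entry strictly increases the rank of a column: first the cycle maximum,
descending, then the position along the cycle. So this submatrix has determinant `1`, and `M` has
a right inverse.
-/

open Polynomial Matrix

open Finset Function

namespace Equiv.Perm

variable {α : Type*} [Fintype α] [LinearOrder α] (σ : Perm α)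

def cycleMax (x : α) : α :=
  (univ.filter (σ.SameCycle x)).max' ⟨x, mem_filter.mpr ⟨mem_univ x, .refl σ x⟩⟩

theorem sameCycle_cycleMax (x : α) : σ.SameCycle x (σ.cycleMax x) :=
  (mem_filter.mp (max'_mem _ _)).2

def cyclePos (x : α) : ℕ :=
  Nat.find (sameCycle_apply_left.mpr (σ.sameCycle_cycleMax x).symm).exists_nat_pow_eq

def cycleRank (x : α) : αᵒᵈ ×ₗ ℕ :=
  toLex (OrderDual.toDual (σ.cycleMax x), σ.cyclePos x)

variable {σ}

theorem le_cycleMax (x : α) : x ≤ σ.cycleMax x :=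
  le_max' _ _ (mem_filter.mpr ⟨mem_univ x, .refl σ x⟩)

theorem SameCycle.cycleMax_eq {x y : α} (h : σ.SameCycle x y) :
    σ.cycleMax x = σ.cycleMax y := by
  have hxy (z : α) : σ.SameCycle x z ↔ σ.SameCycle y z := ⟨h.symm.trans, h.trans⟩
  simp only [cycleMax, hxy]

theorem cycleMax_apply (x : α) : σ.cycleMax (σ x) = σ.cycleMax x :=
  (sameCycle_apply_left.mpr (SameCycle.refl σ x)).cycleMax_eq

theorem apply_le_cycleMax (x : α) : σ x ≤ σ.cycleMax x :=
  cycleMax_apply (σ := σ) x ▸ le_cycleMax (σ x)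

theorem cycleMax_eq_self_of_fixed {x : α} (hx : σ x = x) : σ.cycleMax x = x :=
  ((σ.sameCycle_cycleMax x).eq_of_left hx).symm

theorem cyclePos_apply {x : α} (hx : x ≠ σ.cycleMax x) :
    σ.cyclePos (σ x) = σ.cyclePos x + 1 := by
  have step (p : ℕ) : (σ ^ (p + 1)) (σ (σ.cycleMax x)) = σ x ↔
      (σ ^ p) (σ (σ.cycleMax x)) = x := by
    rw [pow_succ', mul_apply, σ.injective.eq_iff]
  rw [cyclePos, Nat.find_eq_iff, cycleMax_apply, step]
  refine ⟨Nat.find_spec (p := fun p => (σ ^ p) (σ (σ.cycleMax x)) = x) _, fun q hq => ?_⟩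
  cases q with
  | zero => simpa [σ.injective.eq_iff] using hx.symm
  | succ q => exact (step q).not.mpr (Nat.find_min _ (Nat.succ_lt_succ_iff.mp hq))

theorem cycleRank_lt_apply {x : α} (hx : x ≠ σ.cycleMax x) :
    σ.cycleRank x < σ.cycleRank (σ x) := by
  simp [cycleRank, Prod.Lex.toLex_lt_toLex, cycleMax_apply, cyclePos_apply hx]

theorem cycleRank_lt_of_cycleMax_lt {x y : α} (h : σ.cycleMax x < σ.cycleMax y) :
    σ.cycleRank y < σ.cycleRank x :=
  Prod.Lex.toLex_lt_toLex.mpr (Or.inl h)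

end Equiv.Perm

namespace Matrix

variable {R : Type*} [CommRing R]

theorem det_eq_one_of_ranking {ι α : Type*} [Fintype ι] [DecidableEq ι] [LinearOrder α]
    {A : Matrix ι ι R} (ρ : ι → α) (hdiag : ∀ i, A i i = 1)
    (hoff : ∀ i j, i ≠ j → A i j ≠ 0 → ρ i < ρ j) : A.det = 1 := by
  have hA : A.BlockTriangular ρ := fun i j hji =>
    by_contra fun h => (hoff i j (fun hij => (hij ▸ hji).false) h).asymm hji
  rw [hA.det]
  refine prod_eq_one fun a _ => ?_
  have hblock : A.toSquareBlock ρ a = 1 := by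
    ext ⟨i, hi⟩ ⟨j, hj⟩
    by_cases hij : i = j
    · subst hij
      simp [toSquareBlock, toSquareBlockProp, hdiag]
    · have : A i j = 0 := by_contra fun h => (hoff i j hij h).ne (hi.trans hj.symm)
      simp [toSquareBlock, toSquareBlockProp, hij, this]
  rw [hblock, det_one]

theorem exists_mul_eq_one_of_isUnit_det_submatrix {m n : Type*} [Fintype m] [DecidableEq m]
    [Fintype n] [DecidableEq n] (M : Matrix m n R) (κ : m → n)
    (h : IsUnit (M.submatrix id κ).det) : ∃ H : Matrix n m R, M * H = 1 := by
  refine ⟨(1 : Matrix n n R).submatrix id κ * (M.submatrix id κ)⁻¹, ?_⟩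
  have hsub : M * (1 : Matrix n n R).submatrix id κ = M.submatrix id κ := by
    simpa using (submatrix_mul M 1 id id κ bijective_id).symm
  rw [← Matrix.mul_assoc, hsub, mul_nonsing_inv _ h]

end Matrix

theorem Fin.exists_perm_castSucc_eq {k : ℕ} {j : Fin k → Fin (k + 1)} (hj : Injective j) :
    ∃ σ : Equiv.Perm (Fin (k + 1)), ∀ i, σ i.castSucc = j i := by
  classical
  obtain ⟨g, hg⟩ := exists_equiv_extend_of_card_eq (t := univ) (s := univ.map castSuccEmb)
    (f := lastCases 0 j) (by simp) (by simp) (by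
      simp only [coe_map, coe_univ, Set.image_univ]
      rintro _ ⟨a, rfl⟩ _ ⟨b, rfl⟩ h
      simpa using hj (by simpa using h))
  exact ⟨g.trans (Equiv.subtypeUnivEquiv mem_univ),
    fun i => by simpa using hg _ (mem_map_of_mem _ (mem_univ i))⟩

section Construction

variable {k : ℕ} (σ : Equiv.Perm (Fin (k + 1))) (d : Fin k → ℕ)

def IsCycleHead (i : Fin k) : Prop := σ.cycleMax i.castSucc = i.castSucc ∧ 0 < d i

instance : DecidablePred (IsCycleHead σ d) := fun _ => inferInstanceAs (Decidable (_ ∧ _))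

def pivotTargets (i : Fin k) : Finset (Fin (k + 1)) :=
  univ.filter fun c =>
    i.castSucc < c ∧ (c = Fin.last k ∨ ∃ r, IsCycleHead σ d r ∧ c = r.castSucc)

def pivot (i : Fin k) : Fin (k + 1) :=
  if IsCycleHead σ d i then
    (pivotTargets σ d i).min' ⟨Fin.last k, by simp [pivotTargets, Fin.castSucc_lt_last]⟩
  else i.castSucc

-- The `+ 1` puts the constant term `1` on the diagonal when a cycle head is a fixed point.
noncomputable def basicMatrix (R : Type*) [CommRing R] : Matrix (Fin k) (Fin (k + 1)) R[X] :=
  Matrix.of fun i b =>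
    if b = σ i.castSucc then
      if b = i.castSucc ∧ IsCycleHead σ d i then X ^ d i + 1 else X ^ d i
    else if b = i.castSucc ∨ b = pivot σ d i then 1 else 0

variable {σ d}

theorem pivot_of_not_isCycleHead {i : Fin k} (hi : ¬ IsCycleHead σ d i) :
    pivot σ d i = i.castSucc :=
  if_neg hi

theorem pivot_mem_pivotTargets {i : Fin k} (hi : IsCycleHead σ d i) :
    pivot σ d i ∈ pivotTargets σ d i := by
  rw [pivot, if_pos hi]
  exact min'_mem _ _

theorem castSucc_lt_pivot {i : Fin k} (hi : IsCycleHead σ d i) : i.castSucc < pivot σ d i :=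
  (mem_filter.mp (pivot_mem_pivotTargets hi)).2.1

theorem castSucc_le_pivot (i : Fin k) : i.castSucc ≤ pivot σ d i := by
  by_cases hi : IsCycleHead σ d i
  · exact (castSucc_lt_pivot hi).le
  · exact (pivot_of_not_isCycleHead hi).ge

theorem pivot_le {i r : Fin k} (hi : IsCycleHead σ d i) (hr : IsCycleHead σ d r) (hir : i < r) :
    pivot σ d i ≤ r.castSucc := by
  rw [pivot, if_pos hi]
  exact min'_le _ _ (mem_filter.mpr ⟨mem_univ _, Fin.castSucc_lt_castSucc_iff.mpr hir,
    Or.inr ⟨r, hr, rfl⟩⟩)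

theorem pivot_ne_castSucc {i r : Fin k} (hi : IsCycleHead σ d i) (hr : ¬ IsCycleHead σ d r) :
    pivot σ d i ≠ r.castSucc := by
  intro h
  obtain ⟨-, -, hlast | ⟨r', hr', hpivot⟩⟩ := mem_filter.mp (pivot_mem_pivotTargets hi)
  · exact Fin.castSucc_ne_last r (h ▸ hlast)
  · exact hr (Fin.castSucc_injective _ (h ▸ hpivot) ▸ hr')

theorem pivot_lt_pivot {i r : Fin k} (hi : IsCycleHead σ d i) (hr : IsCycleHead σ d r)
    (hir : i < r) : pivot σ d i < pivot σ d r :=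
  (pivot_le hi hr hir).trans_lt (castSucc_lt_pivot hr)

theorem pivot_injective : Injective (pivot σ d) := by
  intro i r h
  by_cases hi : IsCycleHead σ d i <;> by_cases hr : IsCycleHead σ d r
  · rcases lt_trichotomy i r with hir | hir | hir
    · exact absurd h (pivot_lt_pivot hi hr hir).ne
    · exact hir
    · exact absurd h (pivot_lt_pivot hr hi hir).ne'
  · exact absurd (h.trans (pivot_of_not_isCycleHead hr)) (pivot_ne_castSucc hi hr)
  · exact absurd (h.symm.trans (pivot_of_not_isCycleHead hi)) (pivot_ne_castSucc hr hi)
  · rw [pivot_of_not_isCycleHead hi, pivot_of_not_isCycleHead hr] at h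
    exact Fin.castSucc_injective _ h

theorem isCycleHead_iff_of_fixed {i : Fin k} (h : σ i.castSucc = i.castSucc) :
    IsCycleHead σ d i ↔ 0 < d i :=
  and_iff_right (σ.cycleMax_eq_self_of_fixed h)

theorem apply_castSucc_lt_pivot {i : Fin k} (hi : IsCycleHead σ d i) :
    σ i.castSucc < pivot σ d i :=
  ((σ.apply_le_cycleMax _).trans_eq hi.1).trans_lt (castSucc_lt_pivot hi)

theorem apply_castSucc_eq_of_not_isCycleHead (hd : ∀ i, σ i.castSucc < i.castSucc → 0 < d i)
    {i : Fin k} (hi : ¬ IsCycleHead σ d i) (hmax : σ.cycleMax i.castSucc = i.castSucc) :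
    σ i.castSucc = i.castSucc :=
  le_antisymm ((σ.apply_le_cycleMax _).trans_eq hmax) (not_lt.mp fun h => hi ⟨hmax, hd i h⟩)

variable (R : Type*) [CommRing R]

theorem basicMatrix_apply_perm_castSucc (i : Fin k) :
    basicMatrix σ d R i (σ i.castSucc) =
      if σ i.castSucc = i.castSucc ∧ IsCycleHead σ d i then X ^ d i + 1 else X ^ d i :=
  if_pos rfl

theorem basicMatrix_apply_of_ne {i : Fin k} {b : Fin (k + 1)} (hb : b ≠ σ i.castSucc) :
    basicMatrix σ d R i b = if b = i.castSucc ∨ b = pivot σ d i then 1 else 0 :=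
  if_neg hb

theorem basicMatrix_apply_pivot (i : Fin k) : basicMatrix σ d R i (pivot σ d i) = 1 := by
  by_cases hi : IsCycleHead σ d i
  · rw [basicMatrix_apply_of_ne R (apply_castSucc_lt_pivot hi).ne', if_pos (Or.inr rfl)]
  rw [pivot_of_not_isCycleHead hi]
  by_cases hfix : σ i.castSucc = i.castSucc
  · have hd0 : d i = 0 := Nat.eq_zero_of_not_pos ((isCycleHead_iff_of_fixed hfix).not.mp hi)
    rw [← hfix, basicMatrix_apply_perm_castSucc, if_neg (fun h => hi h.2), hd0, pow_zero]
  · rw [basicMatrix_apply_of_ne R (Ne.symm hfix), if_pos (Or.inl rfl)]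

theorem degree_basicMatrix_le_zero {i : Fin k} {b : Fin (k + 1)} (hb : b ≠ σ i.castSucc) :
    (basicMatrix σ d R i b).degree ≤ 0 := by
  rw [basicMatrix_apply_of_ne R hb]
  split_ifs
  exacts [degree_one_le, degree_zero.trans_le bot_le]

theorem degree_basicMatrix_perm_castSucc [Nontrivial R] (i : Fin k) :
    (basicMatrix σ d R i (σ i.castSucc)).degree = d i := by
  rw [basicMatrix_apply_perm_castSucc]
  split_ifs with h
  · rw [← C_1, degree_X_pow_add_C h.2.2]
  · exact degree_X_pow _

theorem degree_basicMatrix_lt (hd : ∀ i, σ i.castSucc < i.castSucc → 0 < d i) {i : Fin k}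
    {b : Fin (k + 1)} (hb : σ i.castSucc < b) : (basicMatrix σ d R i b).degree < d i := by
  rw [basicMatrix_apply_of_ne R hb.ne']
  split_ifs with h
  · have hpos : 0 < d i := by
      by_cases hi : IsCycleHead σ d i
      · exact hi.2
      · rw [pivot_of_not_isCycleHead hi, or_self] at h
        exact hd i (h ▸ hb)
    exact degree_one_le.trans_lt (by exact_mod_cast hpos)
  · exact degree_zero.trans_lt (WithBot.bot_lt_coe _)

theorem eval_zero_basicMatrix_castSucc (i : Fin k) :
    (basicMatrix σ d R i i.castSucc).eval 0 = 1 := by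
  by_cases hfix : σ i.castSucc = i.castSucc
  · rw [← hfix, basicMatrix_apply_perm_castSucc, hfix]
    by_cases hi : IsCycleHead σ d i
    · simp [hi, zero_pow hi.2.ne']
    · simp [hi, Nat.eq_zero_of_not_pos ((isCycleHead_iff_of_fixed hfix).not.mp hi)]
  · rw [basicMatrix_apply_of_ne R (Ne.symm hfix), if_pos (Or.inl rfl), eval_one]

theorem basicMatrix_apply_of_lt {i : Fin k} {b : Fin (k + 1)} (hb : b < i.castSucc) :
    basicMatrix σ d R i b = if b = σ i.castSucc then X ^ d i else 0 := by
  split_ifs with h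
  · rw [h, basicMatrix_apply_perm_castSucc, if_neg fun h' => (h ▸ hb).ne h'.1]
  · rw [basicMatrix_apply_of_ne R h, if_neg]
    rintro (rfl | rfl)
    exacts [hb.false, (castSucc_le_pivot i).not_gt hb]

theorem cycleRank_pivot_lt (hd : ∀ i, σ i.castSucc < i.castSucc → 0 < d i) {u v : Fin k}
    (huv : u ≠ v) (h : basicMatrix σ d R u (pivot σ d v) ≠ 0) :
    σ.cycleRank (pivot σ d u) < σ.cycleRank (pivot σ d v) := by
  have head_lt {c : Fin (k + 1)} (hu : IsCycleHead σ d u) (hc : σ.SameCycle u.castSucc c) :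
      σ.cycleRank (pivot σ d u) < σ.cycleRank c :=
    σ.cycleRank_lt_of_cycleMax_lt <| by
      rw [← hc.cycleMax_eq, hu.1]
      exact (castSucc_lt_pivot hu).trans_le (σ.le_cycleMax _)
  by_cases hv : pivot σ d v = σ u.castSucc
  · rw [hv]
    by_cases hu : IsCycleHead σ d u
    · exact head_lt hu (Equiv.Perm.sameCycle_apply_right.mpr (.refl _ _))
    rw [pivot_of_not_isCycleHead hu]
    refine σ.cycleRank_lt_apply fun hmax => huv (pivot_injective (σ := σ) (d := d) ?_)
    rw [hv, apply_castSucc_eq_of_not_isCycleHead hd hu hmax.symm, pivot_of_not_isCycleHead hu]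
  obtain hv' | hv' : pivot σ d v = u.castSucc ∨ pivot σ d v = pivot σ d u := by
    by_contra h'
    exact h (by rw [basicMatrix_apply_of_ne R hv, if_neg h'])
  · by_cases hu : IsCycleHead σ d u
    · exact hv' ▸ head_lt hu (.refl _ _)
    · exact absurd (pivot_injective (hv'.trans (pivot_of_not_isCycleHead hu).symm)) (Ne.symm huv)
  · exact absurd (pivot_injective hv') (Ne.symm huv)

theorem exists_basicMatrix_mul_eq_one (hd : ∀ i, σ i.castSucc < i.castSucc → 0 < d i) :
    ∃ H : Matrix (Fin (k + 1)) (Fin k) R[X], basicMatrix σ d R * H = 1 := by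
  refine Matrix.exists_mul_eq_one_of_isUnit_det_submatrix _ (pivot σ d) ?_
  have hdet : ((basicMatrix σ d R).submatrix id (pivot σ d)).det = 1 :=
    Matrix.det_eq_one_of_ranking (fun u => σ.cycleRank (pivot σ d u))
      (basicMatrix_apply_pivot R) fun _ _ => cycleRank_pivot_lt R hd
  exact hdet ▸ isUnit_one

end Construction

theorem exists_basic_matrix_with_degrees_strengthened_general {F : Type*} [Field F]
    {n : ℕ} (hn : 2 ≤ n) (j : Fin (n - 1) → Fin n) (hj : Function.Injective j)
    (d : Fin (n - 1) → ℕ) (hjd : ∀ i : Fin (n - 1), ((j i : ℕ) < (i : ℕ)) → 0 < d i) :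
    ∃ M : Matrix (Fin (n - 1)) (Fin n) (Polynomial F), IsBasic M ∧
      (∀ (i : Fin (n - 1)) (b : Fin n), (b : ℕ) < (j i : ℕ) →
        (M i b).degree ≤ (d i : WithBot ℕ)) ∧
      (∀ i : Fin (n - 1), (M i (j i)).degree = (d i : WithBot ℕ)) ∧
      (∀ (i : Fin (n - 1)) (b : Fin n), (j i : ℕ) < (b : ℕ) →
        (M i b).degree < (d i : WithBot ℕ)) ∧
      (∀ i : Fin (n - 1), (M i (Fin.castLE (Nat.sub_le n 1) i)).eval 0 = 1) ∧
      (∀ (i : Fin (n - 1)) (b : Fin n), (b : ℕ) < (i : ℕ) →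
        M i b = if b = j i then Polynomial.X ^ (d i) else 0) ∧
      (∀ i : Fin (n - 1), (j i : ℕ) < (i : ℕ) →
        ∀ b : Fin n, b ≠ j i → (M i b).degree ≤ 0) := by
  obtain ⟨k, rfl⟩ : ∃ k, n = k + 1 := ⟨n - 1, by omega⟩
  obtain ⟨σ, hσ⟩ := Fin.exists_perm_castSucc_eq hj
  obtain rfl : j = fun i => σ i.castSucc := funext fun i => (hσ i).symm
  refine ⟨basicMatrix σ d F, exists_basicMatrix_mul_eq_one F hjd,
    fun i b hb => (degree_basicMatrix_le_zero F (Fin.ne_of_lt hb)).trans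
      (WithBot.coe_le_coe.mpr (Nat.zero_le _)),
    degree_basicMatrix_perm_castSucc F, fun i b hb => degree_basicMatrix_lt F hjd hb,
    eval_zero_basicMatrix_castSucc F, fun i b hb => basicMatrix_apply_of_lt F hb,
    fun i _ b hb => degree_basicMatrix_le_zero F hb⟩

/-- Given pairwise different columns `j_1,…,j_{n−1} ∈ {1,…,n}` and
degrees `d_1,…,d_{n−1} ∈ ℕ` with `j_i < i → d_i > 0`, there is a basic matrix
`M ∈ F[t]^{(n−1)×n}` satisfying (i)–(iv) as in Theorem stmt_12 together with the
strengthened properties: (vi) the only nonzero entries strictly below the diagonal are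
`t^{d_i}` at the positions `(i, j_i)` with `j_i < i`; (vii) if `j_i < i`, then the only
nonconstant entry of row `i` is the one at position `(i, j_i)`. -/
theorem exists_basic_matrix_with_degrees_strengthened {F : Type*} [Field F] [Fintype F]
    {n : ℕ} (hn : 2 ≤ n) (j : Fin (n - 1) → Fin n) (hj : Function.Injective j)
    (d : Fin (n - 1) → ℕ) (hjd : ∀ i : Fin (n - 1), ((j i : ℕ) < (i : ℕ)) → 0 < d i) :
    ∃ M : Matrix (Fin (n - 1)) (Fin n) (Polynomial F), IsBasic M ∧
      (∀ (i : Fin (n - 1)) (b : Fin n), (b : ℕ) < (j i : ℕ) →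
        (M i b).degree ≤ (d i : WithBot ℕ)) ∧
      (∀ i : Fin (n - 1), (M i (j i)).degree = (d i : WithBot ℕ)) ∧
      (∀ (i : Fin (n - 1)) (b : Fin n), (j i : ℕ) < (b : ℕ) →
        (M i b).degree < (d i : WithBot ℕ)) ∧
      (∀ i : Fin (n - 1), (M i (Fin.castLE (Nat.sub_le n 1) i)).eval 0 = 1) ∧
      (∀ (i : Fin (n - 1)) (b : Fin n), (b : ℕ) < (i : ℕ) →
        M i b = if b = j i then Polynomial.X ^ (d i) else 0) ∧
      (∀ i : Fin (n - 1), (j i : ℕ) < (i : ℕ) →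
        ∀ b : Fin n, b ≠ j i → (M i b).degree ≤ 0) :=
  exists_basic_matrix_with_degrees_strengthened_general hn j hj d hjd
end
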